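/- arXiv:2109.06070 — 4 statements merged into one kernel-verified Lean document; each statement's English description precedes it below -/
import Mathlib

section
/- Let c be a continuous function on [-h,0] with sup c < π²/(4h²), and let u ∈ C²((-h,0)) ∩ C([-h,0]) satisfy -u'' - c·u ≤ 0 on (-h,0), u(-h) = 0, and u(0) > 0. If additionally u is differentiable at 0, then u'(0) > 0. -/
/-!
Compare `u` with a multiple of `w y = cos (q * (y - y₀))`. Choosing `q² > sup c` makes `w` a strict
supersolution, `q * (h + y₀) < π / 2` keeps `w` positive on `[-h, 0]`, and `y₀ > 0` gives
`w'(0) > 0`. A positive interior maximum of `u / w` would be a point where `u - K w` has a local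
maximum with positive second derivative, so `u ≤ (u 0 / w 0) • w` on `[-h, 0]`, with equality at
`0`. Comparing one-sided derivatives at `0` gives `u'(0) ≥ (u 0 / w 0) w'(0) > 0`.
-/

open Set Filter Topology Real

theorem HasDerivAt.eventually_nhdsGT_lt {f : ℝ → ℝ} {f' x : ℝ} (hf : HasDerivAt f f' x)
    (hf' : 0 < f') : ∀ᶠ y in 𝓝[>] x, f x < f y := by
  have hslope : Tendsto (slope f x) (𝓝[>] x) (𝓝 f') :=
    (hasDerivAt_iff_tendsto_slope.mp hf).mono_left (nhdsGT_le_nhdsNE x)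
  filter_upwards [hslope.eventually (eventually_gt_nhds hf'), self_mem_nhdsWithin] with y hy hxy
  exact (slope_pos_iff_of_le (le_of_lt hxy)).mp hy

theorem IsLocalMax.nonpos_of_hasDerivAt_of_hasDerivAt {f f' : ℝ → ℝ} {f'' x : ℝ}
    (h : IsLocalMax f x) (hf : ∀ᶠ y in 𝓝 x, HasDerivAt f (f' y) y)
    (hf' : HasDerivAt f' f'' x) : f'' ≤ 0 := by
  by_contra! hpos
  have hcrit : f' x = 0 := h.hasDerivAt_eq_zero hf.self_of_nhds
  obtain ⟨b, hxb, hsub⟩ := mem_nhdsGT_iff_exists_Ioc_subset.mp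
    (((hf.and h).filter_mono nhdsWithin_le_nhds).and (hf'.eventually_nhdsGT_lt hpos))
  have hder : ∀ y ∈ Icc x b, HasDerivAt f (f' y) y := by
    rintro y ⟨hxy, hyb⟩
    rcases hxy.eq_or_lt with rfl | hxy
    · exact hf.self_of_nhds
    · exact (hsub ⟨hxy, hyb⟩).1.1
  obtain ⟨ξ, hξ, hmvt⟩ := exists_hasDerivAt_eq_slope f f' hxb
    (fun y hy => (hder y hy).continuousAt.continuousWithinAt)
    (fun y hy => hder y (Ioo_subset_Icc_self hy))
  have hfb : f b ≤ f x := (hsub ⟨hxb, le_rfl⟩).1.2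
  have hξpos : 0 < f' ξ := hcrit ▸ (hsub ⟨hξ.1, hξ.2.le⟩).2
  rw [hmvt, div_pos_iff_of_pos_right (sub_pos.mpr hxb)] at hξpos
  linarith

theorem IsLocalMaxOn.nonneg_of_hasDerivWithinAt_Iic {f : ℝ → ℝ} {f' b : ℝ}
    (h : IsLocalMaxOn f (Iic b) b) (hf : HasDerivWithinAt f f' (Iic b) b) : 0 ≤ f' := by
  have hcone : (-1 : ℝ) ∈ posTangentConeAt (Iic b) b :=
    mem_posTangentConeAt_of_segment_subset (by
      rw [segment_symm, segment_eq_Icc (by linarith)]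
      exact Icc_subset_Iic_self)
  simpa using h.hasFDerivWithinAt_nonpos hf.hasFDerivWithinAt hcone

theorem le_mul_of_subsolution_of_supersolution {a b M : ℝ} {c u u' u'' w w' w'' : ℝ → ℝ}
    (hu : ContinuousOn u (Icc a b)) (hw : ContinuousOn w (Icc a b))
    (hw_pos : ∀ y ∈ Icc a b, 0 < w y)
    (hu_der : ∀ y ∈ Ioo a b, HasDerivAt u (u' y) y ∧ HasDerivAt u' (u'' y) y)
    (hw_der : ∀ y ∈ Ioo a b, HasDerivAt w (w' y) y ∧ HasDerivAt w' (w'' y) y)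
    (hsub : ∀ y ∈ Ioo a b, -u'' y - c y * u y ≤ 0)
    (hsuper : ∀ y ∈ Ioo a b, 0 < -w'' y - c y * w y)
    (hM : 0 ≤ M) (ha : u a ≤ M * w a) (hb : u b ≤ M * w b) :
    ∀ y ∈ Icc a b, u y ≤ M * w y := by
  intro y hy
  obtain ⟨x, hx, hmax⟩ := isCompact_Icc.exists_isMaxOn ⟨y, hy⟩
    (hu.div hw fun z hz => (hw_pos z hz).ne')
  set K := u x / w x
  have hle_K : ∀ z ∈ Icc a b, u z ≤ K * w z := fun z hz =>
    (div_le_iff₀ (hw_pos z hz)).mp (hmax hz)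
  suffices hKM : K ≤ M from
    (hle_K y hy).trans (mul_le_mul_of_nonneg_right hKM (hw_pos y hy).le)
  by_contra! hKM
  have hK : 0 < K := hM.trans_lt hKM
  have hux : u x = K * w x := (div_mul_cancel₀ _ (hw_pos x hx).ne').symm
  have hx_ne : ∀ z ∈ Icc a b, u z ≤ M * w z → x ≠ z := by
    rintro z hz hz' rfl
    linarith [mul_lt_mul_of_pos_right hKM (hw_pos x hz)]
  have hxI : x ∈ Ioo a b :=
    ⟨hx.1.lt_of_ne (hx_ne a ⟨le_rfl, hx.1.trans hx.2⟩ ha).symm,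
      hx.2.lt_of_ne (hx_ne b ⟨hx.1.trans hx.2, le_rfl⟩ hb)⟩
  have hloc : IsLocalMax (fun z => u z - K * w z) x := by
    filter_upwards [Icc_mem_nhds hxI.1 hxI.2] with z hz
    linarith [hle_K z hz]
  have hder : ∀ᶠ z in 𝓝 x, HasDerivAt (fun z => u z - K * w z) (u' z - K * w' z) z := by
    filter_upwards [Ioo_mem_nhds hxI.1 hxI.2] with z hz
    exact (hu_der z hz).1.sub ((hw_der z hz).1.const_mul K)
  have hsecond := hloc.nonpos_of_hasDerivAt_of_hasDerivAt hder
    ((hu_der x hxI).2.sub ((hw_der x hxI).2.const_mul K))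
  have hsub_x : -u'' x - c x * (K * w x) ≤ 0 := hux ▸ hsub x hxI
  linarith [mul_pos hK (hsuper x hxI)]

theorem exists_cos_comparison_params {S h : ℝ} (hh : 0 < h) (hS : S < π ^ 2 / (4 * h ^ 2)) :
    ∃ q y₀ : ℝ, 0 < q ∧ 0 < y₀ ∧ S < q ^ 2 ∧ q * (h + y₀) < π / 2 := by
  have hS' : √(max S 0) < π / (2 * h) := by
    rw [sqrt_lt' (by positivity), div_pow, mul_pow]
    exact max_lt (by linarith [show (2 : ℝ) ^ 2 = 4 by norm_num]) (by positivity)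
  obtain ⟨q, hq_gt, hq_lt⟩ := exists_between hS'
  have hq : 0 < q := (sqrt_nonneg _).trans_lt hq_gt
  have hqh : h < π / (2 * q) := by
    rw [lt_div_iff₀ (by positivity)] at hq_lt ⊢; linarith
  obtain ⟨r, hhr, hr⟩ := exists_between hqh
  refine ⟨q, r - h, hq, by linarith, ?_, ?_⟩
  · calc S ≤ max S 0 := le_max_left S 0
      _ = √(max S 0) ^ 2 := (sq_sqrt (le_max_right S 0)).symm
      _ < q ^ 2 := by gcongr
  · rw [lt_div_iff₀ (by positivity)] at hr
    linarith

theorem cos_mul_sub_pos {q y₀ h y : ℝ} (hq : 0 < q) (hy₀ : 0 ≤ y₀) (hqh : q * (h + y₀) < π / 2)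
    (hy : y ∈ Icc (-h) 0) : 0 < cos (q * (y - y₀)) := by
  apply cos_pos_of_mem_Ioo
  constructor <;> nlinarith [hy.1, hy.2]

theorem hasDerivAt_cos_mul_sub (q y₀ y : ℝ) :
    HasDerivAt (fun y => cos (q * (y - y₀))) (-sin (q * (y - y₀)) * q) y ∧
      HasDerivAt (fun y => -sin (q * (y - y₀)) * q) (-q ^ 2 * cos (q * (y - y₀))) y := by
  have hθ : HasDerivAt (fun y => q * (y - y₀)) q y := by
    simpa using ((hasDerivAt_id y).sub_const y₀).const_mul q
  exact ⟨hθ.cos, (hθ.sin.fun_neg.mul_const q).congr_deriv (by ring)⟩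

/-- Maximum principle lemma, part (i): if `sup c < π²/(4h²)`, `-u'' - c·u ≤ 0` on `(-h,0)`,
`u(-h) = 0` and `u(0) > 0`, then `u'(0) > 0`. -/
theorem stmt0 (h : ℝ) (hh : 0 < h) (c u u' u'' : ℝ → ℝ)
    (hc : ContinuousOn c (Set.Icc (-h) 0))
    (hsup : sSup (c '' Set.Icc (-h) 0) < Real.pi ^ 2 / (4 * h ^ 2))
    (hu : ContinuousOn u (Set.Icc (-h) 0))
    (hder : ∀ y ∈ Set.Ioo (-h) 0, HasDerivAt u (u' y) y ∧ HasDerivAt u' (u'' y) y)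
    (hineq : ∀ y ∈ Set.Ioo (-h) 0, -u'' y - c y * u y ≤ 0)
    (hbc : u (-h) = 0) (hpos : 0 < u 0)
    (hd0 : HasDerivWithinAt u (u' 0) (Set.Iic 0) 0) :
    0 < u' 0 := by
  obtain ⟨q, y₀, hq, hy₀, hSq, hqh⟩ := exists_cos_comparison_params hh hsup
  have hcq : ∀ y ∈ Icc (-h) 0, c y < q ^ 2 := fun y hy =>
    (le_csSup (isCompact_Icc.image_of_continuousOn hc).bddAbove (mem_image_of_mem c hy)).trans_lt
      hSq
  set w : ℝ → ℝ := fun y => cos (q * (y - y₀))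
  set w' : ℝ → ℝ := fun y => -sin (q * (y - y₀)) * q
  have hw_der : ∀ y, HasDerivAt w (w' y) y ∧ HasDerivAt w' (-q ^ 2 * w y) y :=
    hasDerivAt_cos_mul_sub q y₀
  have hw_pos : ∀ y ∈ Icc (-h) 0, 0 < w y := fun y hy => cos_mul_sub_pos hq hy₀.le hqh hy
  have hw0 : 0 < w 0 := hw_pos 0 ⟨by linarith, le_rfl⟩
  have hw_super : ∀ y ∈ Ioo (-h) 0, 0 < -(-q ^ 2 * w y) - c y * w y := fun y hy => by
    have hy' := Ioo_subset_Icc_self hy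
    linarith [mul_pos (sub_pos.2 (hcq y hy')) (hw_pos y hy')]
  have hw'0 : 0 < w' 0 := by
    have : 0 < sin (q * y₀) := sin_pos_of_pos_of_lt_pi (by positivity) (by nlinarith [pi_pos])
    simp only [w', zero_sub, mul_neg, sin_neg, neg_neg]
    positivity
  set M := u 0 / w 0
  have hM : 0 < M := div_pos hpos hw0
  have hMw0 : M * w 0 = u 0 := div_mul_cancel₀ _ hw0.ne'
  have hcomp : ∀ y ∈ Icc (-h) 0, u y ≤ M * w y :=
    le_mul_of_subsolution_of_supersolution hu (continuous_cos.comp (by fun_prop)).continuousOn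
      hw_pos hder (fun y _ => hw_der y) hineq hw_super hM.le
      (hbc ▸ mul_nonneg hM.le (hw_pos _ ⟨le_rfl, by linarith⟩).le) hMw0.ge
  have hmax : IsLocalMaxOn (fun y => u y - M * w y) (Iic 0) 0 := by
    filter_upwards [Icc_mem_nhdsLE (show -h < 0 by linarith)] with y hy
    linarith [hcomp y hy]
  have hderiv_nonneg := hmax.nonneg_of_hasDerivWithinAt_Iic
    (hd0.sub ((hw_der 0).1.const_mul M).hasDerivWithinAt)
  linarith [mul_pos hM hw'0]
end

section
/- Let c be a continuous function on [-h,0] with sup c < π²/(4h²), and let u ∈ C²((-h,0)) ∩ C([-h,0]) satisfy -u'' - c·u ≥ 0 on (-h,0), u(-h) = 0, and u(0) ≥ 0. Then u ≥ 0 on [-h,0]. -/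
open Set Filter Topology

lemma aux_second_deriv_nonneg (f f' : ℝ → ℝ) (a D : ℝ)
    (hmin : IsLocalMin f a)
    (hf : ∀ᶠ x in 𝓝 a, HasDerivAt f (f' x) x)
    (hf' : HasDerivAt f' D a) : 0 ≤ D := by
  by_contra hD
  push_neg at hD
  have hfa : f' a = 0 := hmin.hasDerivAt_eq_zero hf.self_of_nhds
  have hslope : Tendsto (slope f' a) (𝓝[≠] a) (𝓝 D) :=
    hasDerivAt_iff_tendsto_slope.mp hf'
  have hev : ∀ᶠ x in 𝓝[≠] a, slope f' a x < 0 :=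
    hslope.eventually_lt_const hD
  have hev' : ∀ᶠ x in 𝓝 a, x ≠ a → slope f' a x < 0 := by
    rwa [eventually_nhdsWithin_iff] at hev
  have hall : ∀ᶠ x in 𝓝 a,
      (x ≠ a → slope f' a x < 0) ∧ HasDerivAt f (f' x) x ∧ f a ≤ f x :=
    hev'.and (hf.and hmin)
  obtain ⟨ε, hε, hball⟩ := Metric.eventually_nhds_iff.mp hall
  set b := a + ε / 2 with hb
  have hab : a < b := by simp [hb]; linarith
  have hmem : ∀ x ∈ Icc a b, dist x a < ε := by
    intro x hx
    have h1 := hx.1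
    have h2 : x ≤ a + ε / 2 := hx.2
    rw [Real.dist_eq, abs_lt]
    constructor <;> linarith
  have hcont : ContinuousOn f (Icc a b) := fun x hx =>
    ((hball (hmem x hx)).2.1.continuousAt).continuousWithinAt
  have hderneg : ∀ x ∈ interior (Icc a b), deriv f x < 0 := by
    intro x hx
    rw [interior_Icc] at hx
    have hd := hball (hmem x ⟨hx.1.le, hx.2.le⟩)
    have hxa : x ≠ a := ne_of_gt hx.1
    have hs := hd.1 hxa
    rw [slope_def_field, hfa, sub_zero] at hs
    have : f' x < 0 := by
      have hxa' : 0 < x - a := by linarith [hx.1]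
      rcases div_neg_iff.mp hs with ⟨h1, h2⟩ | ⟨h1, h2⟩
      · linarith
      · exact h1
    rwa [hd.2.1.deriv]
  have hanti : StrictAntiOn f (Icc a b) :=
    strictAntiOn_of_deriv_neg (convex_Icc a b) hcont hderneg
  have h1 : f b < f a := hanti (left_mem_Icc.mpr hab.le) (right_mem_Icc.mpr hab.le) hab
  have h2 : f a ≤ f b := (hball (hmem b (right_mem_Icc.mpr hab.le))).2.2
  linarith

lemma aux_comparison (h : ℝ) (hh : 0 < h) (c u u' u'' w w' : ℝ → ℝ) (K : ℝ)
    (hu : ContinuousOn u (Set.Icc (-h) 0))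
    (hder : ∀ y ∈ Set.Ioo (-h) 0, HasDerivAt u (u' y) y ∧ HasDerivAt u' (u'' y) y)
    (hineq : ∀ y ∈ Set.Ioo (-h) 0, 0 ≤ -u'' y - c y * u y)
    (hbc : u (-h) = 0) (hpos : 0 ≤ u 0)
    (hwpos : ∀ y ∈ Set.Icc (-h) 0, 0 < w y)
    (hwcont : ContinuousOn w (Set.Icc (-h) 0))
    (hw' : ∀ y : ℝ, HasDerivAt w (w' y) y)
    (hw'' : ∀ y : ℝ, HasDerivAt w' (-(K * w y)) y)
    (hKc : ∀ y ∈ Set.Icc (-h) 0, c y < K) :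
    ∀ y ∈ Set.Icc (-h) 0, 0 ≤ u y := by
  set v : ℝ → ℝ := fun y => u y / w y with hvdef
  have hvcont : ContinuousOn v (Icc (-h) 0) :=
    hu.div hwcont (fun y hy => (hwpos y hy).ne')
  obtain ⟨a, ha, hmin⟩ := isCompact_Icc.exists_isMinOn
    (Set.nonempty_Icc.mpr (by linarith : -h ≤ (0:ℝ))) hvcont
  suffices hkey : 0 ≤ v a by
    intro y hy
    have h1 : 0 ≤ v y := le_trans hkey (hmin hy)
    have h2 : u y = v y * w y := (div_mul_cancel₀ (u y) (hwpos y hy).ne').symm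
    rw [h2]
    exact mul_nonneg h1 (hwpos y hy).le
  by_contra hva
  push_neg at hva
  have hvh : v (-h) = 0 := by simp [hvdef, hbc]
  have hv0 : 0 ≤ v 0 := div_nonneg hpos (hwpos 0 (by constructor <;> linarith)).le
  have haIoo : a ∈ Ioo (-h) 0 := by
    rcases ha.1.lt_or_eq with h1 | h1
    · rcases ha.2.lt_or_eq with h2 | h2
      · exact ⟨h1, h2⟩
      · exfalso; rw [h2] at hva; linarith
    · exfalso; rw [← h1] at hva; linarith
  have hIccnhds : Icc (-h) 0 ∈ 𝓝 a := Icc_mem_nhds haIoo.1 haIoo.2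
  have hlocmin : IsLocalMin v a := hmin.isLocalMin hIccnhds
  set vd : ℝ → ℝ := fun y => (u' y * w y - u y * w' y) / (w y) ^ 2 with hvddef
  have hwne : ∀ y ∈ Ioo (-h) 0, w y ≠ 0 := fun y hy =>
    (hwpos y ⟨hy.1.le, hy.2.le⟩).ne'
  have hvderiv : ∀ y ∈ Ioo (-h) 0, HasDerivAt v (vd y) y := by
    intro y hy
    exact (hder y hy).1.div (hw' y) (hwne y hy)
  have hvev : ∀ᶠ x in 𝓝 a, HasDerivAt v (vd x) x :=
    eventually_of_mem (isOpen_Ioo.mem_nhds haIoo) hvderiv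
  have hvda : vd a = 0 := hlocmin.hasDerivAt_eq_zero hvev.self_of_nhds
  have hwane : w a ≠ 0 := hwne a haIoo
  have hwapos : 0 < w a := hwpos a ⟨haIoo.1.le, haIoo.2.le⟩
  have hNa : u' a * w a - u a * w' a = 0 := by
    have h0 := hvda
    rw [hvddef] at h0
    simp only at h0
    exact (div_eq_zero_iff.mp h0).resolve_right (pow_ne_zero 2 hwane)
  have hN : HasDerivAt (fun y => u' y * w y - u y * w' y)
      (u'' a * w a + u' a * w' a - (u' a * w' a + u a * (-(K * w a)))) a :=
    ((hder a haIoo).2.mul (hw' a)).sub ((hder a haIoo).1.mul (hw'' a))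
  have hden : HasDerivAt (fun y => (w y) ^ 2) (2 * w a ^ 1 * w' a) a := (hw' a).pow 2
  have hvd2 : HasDerivAt vd
      (((u'' a * w a + u' a * w' a - (u' a * w' a + u a * (-(K * w a)))) * w a ^ 2
        - (u' a * w a - u a * w' a) * (2 * w a ^ 1 * w' a)) / (w a ^ 2) ^ 2) a :=
    hN.div hden (pow_ne_zero 2 hwane)
  have hD : 0 ≤ ((u'' a * w a + u' a * w' a - (u' a * w' a + u a * (-(K * w a)))) * w a ^ 2
        - (u' a * w a - u a * w' a) * (2 * w a ^ 1 * w' a)) / (w a ^ 2) ^ 2 :=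
    aux_second_deriv_nonneg v vd a _ hlocmin hvev hvd2
  rw [hNa] at hD
  have hnum : 0 ≤ u'' a + u a * K := by
    have hd2 : (0:ℝ) < (w a ^ 2) ^ 2 := by positivity
    rcases div_nonneg_iff.mp hD with ⟨h1, _⟩ | ⟨_, h2⟩
    · nlinarith [hwapos]
    · nlinarith
  have hua : u a < 0 := by
    rcases div_neg_iff.mp hva with ⟨h1, h2⟩ | ⟨h1, h2⟩
    · linarith
    · exact h1
  have hca : c a < K := hKc a ⟨haIoo.1.le, haIoo.2.le⟩
  have hiq := hineq a haIoo
  nlinarith [mul_neg_of_pos_of_neg (by linarith : 0 < K - c a) hua]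

/-- Maximum principle lemma, part (ii): if `sup c < π²/(4h²)`, `-u'' - c·u ≥ 0` on `(-h,0)`,
`u(-h) = 0` and `u(0) ≥ 0`, then `u ≥ 0` on `[-h,0]`. -/
theorem stmt1 (h : ℝ) (hh : 0 < h) (c u u' u'' : ℝ → ℝ)
    (hc : ContinuousOn c (Set.Icc (-h) 0))
    (hsup : sSup (c '' Set.Icc (-h) 0) < Real.pi ^ 2 / (4 * h ^ 2))
    (hu : ContinuousOn u (Set.Icc (-h) 0))
    (hder : ∀ y ∈ Set.Ioo (-h) 0, HasDerivAt u (u' y) y ∧ HasDerivAt u' (u'' y) y)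
    (hineq : ∀ y ∈ Set.Ioo (-h) 0, 0 ≤ -u'' y - c y * u y)
    (hbc : u (-h) = 0) (hpos : 0 ≤ u 0) :
    ∀ y ∈ Set.Icc (-h) 0, 0 ≤ u y := by
  have hpi : (0:ℝ) < Real.pi := Real.pi_pos
  set B := Real.pi ^ 2 / (4 * h ^ 2) with hBdef
  have hB0 : 0 < B := by positivity
  set M := sSup (c '' Icc (-h) 0) with hMdef
  have hMle : ∀ y ∈ Icc (-h) 0, c y ≤ M := fun y hy =>
    le_csSup (isCompact_Icc.image_of_continuousOn hc).bddAbove (mem_image_of_mem _ hy)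
  set K := (max M 0 + B) / 2 with hKdef
  have hmax : max M 0 < B := max_lt hsup hB0
  have hmax0 : 0 ≤ max M 0 := le_max_right _ _
  have hMmax : M ≤ max M 0 := le_max_left _ _
  have hKpos : 0 < K := by rw [hKdef]; linarith
  have hKltB : K < B := by rw [hKdef]; linarith
  have hMK : M < K := by rw [hKdef]; linarith
  set q := Real.sqrt K with hqdef
  have hq2 : q ^ 2 = K := Real.sq_sqrt hKpos.le
  have hqpos : 0 < q := Real.sqrt_pos.mpr hKpos
  have hqlt : q < Real.pi / (2 * h) := by
    have h1 : Real.sqrt B = Real.pi / (2 * h) := by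
      rw [show B = (Real.pi / (2 * h)) ^ 2 by rw [hBdef]; field_simp; ring]
      exact Real.sqrt_sq (by positivity)
    rw [hqdef, ← h1]
    exact Real.sqrt_lt_sqrt hKpos.le hKltB
  set w : ℝ → ℝ := fun y => Real.cos (q * (y + h / 2)) with hwdef
  have hwpos : ∀ y ∈ Icc (-h) 0, 0 < w y := by
    intro y hy
    apply Real.cos_pos_of_mem_Ioo
    have h3 : q * (h/2) < Real.pi / (2*h) * (h/2) :=
      mul_lt_mul_of_pos_right hqlt (by linarith)
    have h4 : Real.pi / (2*h) * (h/2) = Real.pi / 4 := by field_simp; ring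
    rw [h4] at h3
    constructor
    · have h1 : -(h/2) ≤ y + h/2 := by linarith [hy.1]
      have h2 : q * (-(h/2)) ≤ q * (y + h/2) := mul_le_mul_of_nonneg_left h1 hqpos.le
      have h5 : q * (-(h/2)) = -(q * (h/2)) := by ring
      rw [h5] at h2
      linarith
    · have h1 : y + h/2 ≤ h/2 := by linarith [hy.2]
      have h2 : q * (y + h/2) ≤ q * (h/2) := mul_le_mul_of_nonneg_left h1 hqpos.le
      linarith
  have hwcont : ContinuousOn w (Icc (-h) 0) :=
    (Real.continuous_cos.comp (by continuity)).continuousOn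
  set w' : ℝ → ℝ := fun y => -Real.sin (q * (y + h / 2)) * q with hw'def
  have hθ : ∀ y : ℝ, HasDerivAt (fun y => q * (y + h / 2)) q y := by
    intro y
    simpa using ((hasDerivAt_id y).add_const (h/2)).const_mul q
  have hw' : ∀ y : ℝ, HasDerivAt w (w' y) y := fun y => (hθ y).cos
  have hw'' : ∀ y : ℝ, HasDerivAt w' (-(K * w y)) y := by
    intro y
    have H : HasDerivAt w' (-(Real.cos (q * (y + h/2)) * q) * q) y :=
      ((hθ y).sin.neg).mul_const q
    have he : -(Real.cos (q * (y + h/2)) * q) * q = -(K * w y) := by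
      rw [hwdef]
      simp only
      rw [← hq2]
      ring
    rwa [he] at H
  have hKc : ∀ y ∈ Icc (-h) 0, c y < K := fun y hy => lt_of_le_of_lt (hMle y hy) hMK
  exact aux_comparison h hh c u u' u'' w w' K hu hder hineq hbc hpos hwpos hwcont hw' hw'' hKc
end

section
/- Let c be a continuous function on [-h,0] with sup c < π²/(4h²), and let u ∈ C²((-h,0)) ∩ C¹([-h,0]) satisfy -u'' - c·u ≥ 0 on (-h,0), u(0) = 0, and u'(0) > 0. Then u < 0 on [-h,0). -/
/-!
Suppose `u ≥ 0` somewhere in `[-h, 0)` and let `b` be the last such point; since `u(0) = 0` and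
`u'(0) > 0`, `u < 0` on a left neighbourhood of `0`, so `b < 0` and `u < 0` on `(b, 0)`.
Pick `sup c < q² < π² / (4h²)`, so that `w y = cos (q y)` is positive on `[-h, 0]` and
`-w'' - c w = (q² - c) w > 0`. On `(b, 0)` the Wronskian `u' w - u w'` has derivative
`(u'' + c u) w + u (-w'' - c w) < 0`, so it is larger than its value `u'(0) w(0) > 0` at `0`.
Hence `(u / w)' = (u' w - u w') / w² > 0`, and `u(b) / w(b) < u(0) / w(0) = 0`, a contradiction.
-/

open Set Filter Topology Real

theorem HasDerivWithinAt.eventually_lt_of_Iio {f : ℝ → ℝ} {f' x : ℝ}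
    (hf : HasDerivWithinAt f f' (Iio x) x) (hf' : 0 < f') : ∀ᶠ y in 𝓝[<] x, f y < f x := by
  have hslope := (hasDerivWithinAt_iff_tendsto_slope' (self_notMem_Iio (a := x))).mp hf
  filter_upwards [hslope.eventually (eventually_gt_nhds hf'), self_mem_nhdsWithin] with y hy hyx
  exact (slope_pos_iff_gt hyx).mp hy

theorem ContinuousOn.exists_nonneg_forall_Ioc_neg {u : ℝ → ℝ} {a c : ℝ}
    (hu : ContinuousOn u (Icc a c)) (hac : a ≤ c) (ha : 0 ≤ u a) :
    ∃ b ∈ Icc a c, 0 ≤ u b ∧ ∀ y ∈ Ioc b c, u y < 0 := by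
  have hclosed : IsClosed (Icc a c ∩ u ⁻¹' Ici 0) :=
    hu.preimage_isClosed_of_isClosed isClosed_Icc isClosed_Ici
  obtain ⟨b, ⟨hb, hub⟩, hmax⟩ := (isCompact_Icc.of_isClosed_subset hclosed
    inter_subset_left).exists_isGreatest ⟨a, ⟨left_mem_Icc.mpr hac, ha⟩⟩
  refine ⟨b, hb, hub, fun y hy => ?_⟩
  by_contra! huy
  exact (hmax ⟨⟨hb.1.trans hy.1.le, hy.2⟩, huy⟩).not_gt hy.1

section Comparison

variable {c u u' u'' w w' w'' : ℝ → ℝ} {a b : ℝ}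

theorem hasDerivAt_wronskian {y : ℝ} (hu : HasDerivAt u (u' y) y)
    (hu' : HasDerivAt u' (u'' y) y)
    (hw : HasDerivAt w (w' y) y) (hw' : HasDerivAt w' (w'' y) y) :
    HasDerivAt (fun z => u' z * w z - u z * w' z) (u'' y * w y - u y * w'' y) y :=
  ((hu'.fun_mul hw).fun_sub (hu.fun_mul hw')).congr_deriv (by ring)

theorem neg_left_of_pos_strict_supersolution (hba : b < a)
    (hu : ContinuousOn u (Icc b a)) (hu' : ContinuousOn u' (Icc b a))
    (hdu : ∀ y ∈ Ioo b a, HasDerivAt u (u' y) y)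
    (hdu' : ∀ y ∈ Ioo b a, HasDerivAt u' (u'' y) y)
    (hw : ContinuousOn w (Icc b a)) (hw' : ContinuousOn w' (Icc b a))
    (hdw : ∀ y ∈ Ioo b a, HasDerivAt w (w' y) y)
    (hdw' : ∀ y ∈ Ioo b a, HasDerivAt w' (w'' y) y)
    (hwpos : ∀ y ∈ Icc b a, 0 < w y)
    (hLu : ∀ y ∈ Ioo b a, 0 ≤ -u'' y - c y * u y)
    (hLw : ∀ y ∈ Ioo b a, 0 < -w'' y - c y * w y)
    (hneg : ∀ y ∈ Ioo b a, u y < 0) (hua : u a = 0) (hu'a : 0 < u' a) : u b < 0 := by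
  set W : ℝ → ℝ := fun z => u' z * w z - u z * w' z
  have hW_anti : StrictAntiOn W (Icc b a) := by
    refine strictAntiOn_of_hasDerivWithinAt_neg (convex_Icc b a)
      ((hu'.mul hw).sub (hu.mul hw')) (f' := fun y => u'' y * w y - u y * w'' y) ?_ ?_
    · rw [interior_Icc]
      exact fun y hy => (hasDerivAt_wronskian (hdu y hy) (hdu' y hy) (hdw y hy)
        (hdw' y hy)).hasDerivWithinAt
    · rw [interior_Icc]
      intro y hy
      have hsplit : u'' y * w y - u y * w'' y
          = (u'' y + c y * u y) * w y + u y * (-w'' y - c y * w y) := by ring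
      rw [hsplit]
      exact add_neg_of_nonpos_of_neg
        (mul_nonpos_of_nonpos_of_nonneg (by linarith [hLu y hy])
          (hwpos y (Ioo_subset_Icc_self hy)).le)
        (mul_neg_of_neg_of_pos (hneg y hy) (hLw y hy))
  have hW_pos : ∀ y ∈ Ioo b a, 0 < W y := fun y hy =>
    calc 0 < u' a * w a := mul_pos hu'a (hwpos a (right_mem_Icc.mpr hba.le))
      _ = W a := by simp [W, hua]
      _ < W y := hW_anti (Ioo_subset_Icc_self hy) (right_mem_Icc.mpr hba.le) hy.2
  have hv_mono : StrictMonoOn (u / w) (Icc b a) := by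
    refine strictMonoOn_of_hasDerivWithinAt_pos (convex_Icc b a)
      (hu.div hw fun y hy => (hwpos y hy).ne') (f' := fun y => W y / w y ^ 2) ?_ ?_
    · rw [interior_Icc]
      exact fun y hy => ((hdu y hy).div (hdw y hy)
        (hwpos y (Ioo_subset_Icc_self hy)).ne').hasDerivWithinAt
    · rw [interior_Icc]
      exact fun y hy => div_pos (hW_pos y hy) (pow_pos (hwpos y (Ioo_subset_Icc_self hy)) 2)
  have hvb : u b / w b < 0 := by
    simpa [hua] using hv_mono (left_mem_Icc.mpr hba.le) (right_mem_Icc.mpr hba.le) hba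
  exact neg_of_div_neg_left hvb (hwpos b (left_mem_Icc.mpr hba.le)).le

end Comparison

theorem exists_pos_lt_sq_mul_lt_pi_div_two {M h : ℝ} (hh : 0 < h)
    (hM : M < π ^ 2 / (4 * h ^ 2)) :
    ∃ q > 0, M < q ^ 2 ∧ q * h < π / 2 := by
  obtain ⟨t, hMt, htP⟩ := exists_between (max_lt hM (by positivity))
  have ht : 0 < t := (le_max_right M 0).trans_lt hMt
  refine ⟨√t, sqrt_pos.mpr ht, ?_, ?_⟩
  · rw [sq_sqrt ht.le]
    exact (le_max_left M 0).trans_lt hMt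
  · rw [← lt_div_iff₀ hh, div_div, sqrt_lt' (by positivity)]
    exact htP.trans_eq (by ring)

theorem hasDerivAt_cos_const_mul (q y : ℝ) :
    HasDerivAt (fun y => cos (q * y)) (-(q * sin (q * y))) y :=
  ((hasDerivAt_id' y).const_mul q).cos.congr_deriv (by ring)

theorem hasDerivAt_neg_const_mul_sin_const_mul (q y : ℝ) :
    HasDerivAt (fun y => -(q * sin (q * y))) (-(q ^ 2 * cos (q * y))) y :=
  (((hasDerivAt_id' y).const_mul q).sin.const_mul q).neg.congr_deriv (by ring)

theorem neg_of_forall_Ioo_neg_of_sSup_lt {h : ℝ} {c u u' u'' : ℝ → ℝ} (hh : 0 < h)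
    (hc : ContinuousOn c (Icc (-h) 0)) (hsup : sSup (c '' Icc (-h) 0) < π ^ 2 / (4 * h ^ 2))
    (hu : ContinuousOn u (Icc (-h) 0)) (hu' : ContinuousOn u' (Icc (-h) 0))
    (hd : ∀ y ∈ Icc (-h) 0, HasDerivWithinAt u (u' y) (Icc (-h) 0) y)
    (hder : ∀ y ∈ Ioo (-h) 0, HasDerivAt u' (u'' y) y)
    (hineq : ∀ y ∈ Ioo (-h) 0, 0 ≤ -u'' y - c y * u y) (hbc : u 0 = 0) (hdpos : 0 < u' 0)
    {b : ℝ} (hb : b ∈ Ico (-h) 0) (hneg : ∀ y ∈ Ioo b 0, u y < 0) : u b < 0 := by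
  obtain ⟨q, hq, hcq, hqh⟩ := exists_pos_lt_sq_mul_lt_pi_div_two hh hsup
  have hsub : Icc b 0 ⊆ Icc (-h) 0 := Icc_subset_Icc_left hb.1
  have hIoo : Ioo b 0 ⊆ Ioo (-h) 0 := Ioo_subset_Ioo_left hb.1
  have hcos : ∀ y ∈ Icc (-h) 0, 0 < cos (q * y) := fun y hy =>
    cos_pos_of_mem_Ioo ⟨by nlinarith [hy.1], by nlinarith [hy.2]⟩
  have hc_lt : ∀ y ∈ Icc (-h) 0, c y < q ^ 2 := fun y hy =>
    (le_csSup (isCompact_Icc.image_of_continuousOn hc).bddAbove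
      (mem_image_of_mem c hy)).trans_lt hcq
  refine neg_left_of_pos_strict_supersolution hb.2 (hu.mono hsub) (hu'.mono hsub)
    (fun y hy => (hd y (hsub (Ioo_subset_Icc_self hy))).hasDerivAt
      (Icc_mem_nhds (hb.1.trans_lt hy.1) hy.2))
    (fun y hy => hder y (hIoo hy)) (by fun_prop) (by fun_prop)
    (fun y _ => hasDerivAt_cos_const_mul q y)
    (fun y _ => hasDerivAt_neg_const_mul_sin_const_mul q y)
    (fun y hy => hcos y (hsub hy)) (fun y hy => hineq y (hIoo hy)) (fun y hy => ?_)
    hneg hbc hdpos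
  have hy' := Ioo_subset_Icc_self (hIoo hy)
  have : 0 < (q ^ 2 - c y) * cos (q * y) := mul_pos (sub_pos.mpr (hc_lt y hy')) (hcos y hy')
  linarith

/-- Maximum principle lemma, part (iii): if `sup c < π²/(4h²)`, `-u'' - c·u ≥ 0` on `(-h,0)`,
`u(0) = 0` and `u'(0) > 0`, then `u < 0` on `[-h,0)`. -/
theorem stmt2 (h : ℝ) (hh : 0 < h) (c u u' u'' : ℝ → ℝ)
    (hc : ContinuousOn c (Set.Icc (-h) 0))
    (hsup : sSup (c '' Set.Icc (-h) 0) < Real.pi ^ 2 / (4 * h ^ 2))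
    (hu : ContinuousOn u (Set.Icc (-h) 0))
    (hu' : ContinuousOn u' (Set.Icc (-h) 0))
    (hd : ∀ y ∈ Set.Icc (-h) 0, HasDerivWithinAt u (u' y) (Set.Icc (-h) 0) y)
    (hder : ∀ y ∈ Set.Ioo (-h) 0, HasDerivAt u' (u'' y) y)
    (hineq : ∀ y ∈ Set.Ioo (-h) 0, 0 ≤ -u'' y - c y * u y)
    (hbc : u 0 = 0) (hdpos : 0 < u' 0) :
    ∀ y ∈ Set.Ico (-h) 0, u y < 0 := by
  intro y₁ hy₁
  by_contra! hpos
  have h0 : -h < 0 := by linarith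
  have hu'0 : HasDerivWithinAt u (u' 0) (Iio 0) 0 :=
    (hd 0 ⟨h0.le, le_rfl⟩).mono_of_mem_nhdsWithin (Icc_mem_nhdsLT h0)
  obtain ⟨l, hl : l < 0, hul⟩ :=
    mem_nhdsLT_iff_exists_Ioo_subset.mp (hu'0.eventually_lt_of_Iio hdpos)
  have hul : ∀ y ∈ Ioo l 0, u y < 0 := fun y hy => hbc ▸ hul hy
  have hy₁l : y₁ ≤ l := not_lt.mp fun hly₁ => (hul y₁ ⟨hly₁, hy₁.2⟩).not_ge hpos
  obtain ⟨b, hb, hub, hneg⟩ :=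
    (hu.mono (Icc_subset_Icc hy₁.1 hl.le)).exists_nonneg_forall_Ioc_neg hy₁l hpos
  refine (neg_of_forall_Ioo_neg_of_sSup_lt hh hc hsup hu hu' hd hder hineq hbc hdpos
    ⟨hy₁.1.trans hb.1, hb.2.trans_lt hl⟩ fun y hy => ?_).not_ge hub
  rcases le_or_gt y l with hyl | hly
  · exact hneg y ⟨hy.1, hyl⟩
  · exact hul y ⟨hly, hy.2⟩
end

section
/- Let A, B : ℝ × [-h,0] → ℝ with A + iB holomorphic in the strip, L-periodic in x, B = 0 on y = -h, and A + iB never zero. Suppose C + iD is holomorphic, L-periodic in x, with D = 0 on y = -h, and suppose the real part of (C+iD)/(A+iB) evaluated on the top boundary y = 0 equals ½ d/dx ln(A(x,0)² + B(x,0)²). If Re[(C+iD)/(A+iB)] restricted to y = 0 has average equal to some constant K over one period plus the average of an exact derivative, and the imaginary part of (C+iD)/(A+iB) vanishes on y = -h, then the constant K in the decomposition (C+iD)/(A+iB) = E + iG + K (where E + iG is holomorphic with Im part vanishing at y = -h and Re part of zero horizontal average) must equal 0. -/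
open Complex in
/-- Key algebraic step of the Babenko-type reformulation: suppose `F = A + iB` and
`Φ = C + iD` are holomorphic on the closed periodic strip `-h ≤ Im z ≤ 0`, `L`-periodic,
with `F` nowhere zero and `Im F = Im Φ = 0` on `Im z = -h`; suppose
`Φ/F = Ψ + K` with `Ψ = E + iG` holomorphic, `Im Ψ = 0` on `Im z = -h`, and `Re Ψ`
of zero average over each horizontal line; and suppose `Re(Φ/F)` on the top boundary
is the exact derivative of the `L`-periodic function `x ↦ ½ ln(A(x,0)² + B(x,0)²)`.
Then `K = 0`. -/
theorem stmt19 (h L : ℝ) (hh : 0 < h) (hL : 0 < L) (F Φ Ψ : ℂ → ℂ) (K : ℝ)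
    (hF : DifferentiableOn ℂ F {z : ℂ | -h < z.im ∧ z.im < 0})
    (hFc : ContinuousOn F {z : ℂ | -h ≤ z.im ∧ z.im ≤ 0})
    (hΦ : DifferentiableOn ℂ Φ {z : ℂ | -h < z.im ∧ z.im < 0})
    (hΦc : ContinuousOn Φ {z : ℂ | -h ≤ z.im ∧ z.im ≤ 0})
    (hΨ : DifferentiableOn ℂ Ψ {z : ℂ | -h < z.im ∧ z.im < 0})
    (hΨc : ContinuousOn Ψ {z : ℂ | -h ≤ z.im ∧ z.im ≤ 0})
    (hFper : ∀ z : ℂ, F (z + L) = F z)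
    (hΦper : ∀ z : ℂ, Φ (z + L) = Φ z)
    (hΨper : ∀ z : ℂ, Ψ (z + L) = Ψ z)
    (hFne : ∀ z : ℂ, -h ≤ z.im → z.im ≤ 0 → F z ≠ 0)
    (hFbot : ∀ x : ℝ, (F (x + (-h : ℝ) * I)).im = 0)
    (hΦbot : ∀ x : ℝ, (Φ (x + (-h : ℝ) * I)).im = 0)
    (hΨbot : ∀ x : ℝ, (Ψ (x + (-h : ℝ) * I)).im = 0)
    (hdecomp : ∀ z : ℂ, -h ≤ z.im → z.im ≤ 0 → Φ z / F z = Ψ z + K)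
    (hΨavg : ∀ y ∈ Set.Icc (-h) (0:ℝ), ∫ x in (0:ℝ)..L, (Ψ (x + y * I)).re = 0)
    (hexact : ∀ x : ℝ,
      HasDerivAt (fun x : ℝ => (1 / 2) * Real.log ((F x).re ^ 2 + (F x).im ^ 2))
        ((Φ x / F x).re) x) :
    K = 0 := by
  have hmem : ∀ x : ℝ, ((x:ℂ)) ∈ {z : ℂ | -h ≤ z.im ∧ z.im ≤ 0} := by
    intro x; simp [hh.le]
  have hcont : ∀ G : ℂ → ℂ, ContinuousOn G {z : ℂ | -h ≤ z.im ∧ z.im ≤ 0} →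
      ContinuousOn (fun x : ℝ => G x) (Set.uIcc 0 L) := by
    intro G hG
    exact hG.comp Complex.continuous_ofReal.continuousOn (fun x _ => hmem x)
  have hint : IntervalIntegrable (fun x : ℝ => (Φ x / F x).re)
      MeasureTheory.volume 0 L := by
    apply ContinuousOn.intervalIntegrable
    exact Complex.continuous_re.comp_continuousOn ((hcont Φ hΦc).div (hcont F hFc)
      (fun x _ => hFne x (by simp [hh.le]) (by simp)))
  have hintΨ : IntervalIntegrable (fun x : ℝ => (Ψ x).re)
      MeasureTheory.volume 0 L :=
    ContinuousOn.intervalIntegrable (Complex.continuous_re.comp_continuousOn (hcont Ψ hΨc))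
  have hftc : (∫ x in (0:ℝ)..L, (Φ x / F x).re)
      = (1/2) * Real.log ((F L).re ^ 2 + (F L).im ^ 2)
        - (1/2) * Real.log ((F 0).re ^ 2 + (F 0).im ^ 2) :=
    intervalIntegral.integral_eq_sub_of_hasDerivAt (fun x _ => hexact x) hint
  have hFL : F (L:ℂ) = F 0 := by simpa using hFper 0
  rw [hFL, sub_self] at hftc
  have heq : ∀ x : ℝ, (Φ x / F x).re = (Ψ x).re + K := by
    intro x
    rw [hdecomp x (by simp [hh.le]) (by simp)]
    simp
  have hΨ0 : (∫ x in (0:ℝ)..L, (Ψ x).re) = 0 := by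
    have := hΨavg 0 ⟨by linarith, le_refl 0⟩
    simpa using this
  have hsum : (∫ x in (0:ℝ)..L, (Φ x / F x).re) = L * K := by
    have : (∫ x in (0:ℝ)..L, (Φ x / F x).re)
        = (∫ x in (0:ℝ)..L, (Ψ x).re) + ∫ x in (0:ℝ)..L, (K:ℝ) := by
      rw [← intervalIntegral.integral_add hintΨ (intervalIntegrable_const)]
      exact intervalIntegral.integral_congr fun x _ => heq x
    simp [this, hΨ0, mul_comm]
  rw [hftc] at hsum
  exact (mul_eq_zero.mp hsum.symm).resolve_left hL.ne'
end
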